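/- For all σ₁, σ₂ ∈ {±s}, the product G₂(σ₁,σ₂)(u,v) defined in the context is a symmetric function of (u,v); consequently, by induction together with the reduction steps, G_N(σ₁,...,σ_N)(u,v) is symmetric in (u,v) for every N ≥ 1 and every choice of σ_i ∈ {±s}. -/

import Mathlib

open Finset

/-- `G_N(σ)(u,v) = e^{−2λs∑σ_k} ∏_{k=1}^{N} ∏_{j'} ( e^{(σ_k/(2s))(v−u)}
  + e^{(σ_k/(2s))(u−v) + 2j'λ + 2λ(∑_{i>k} σ_i − ∑_{i<k} σ_i)} )`,
where `j'` ranges over `−s+1/2, …, s−1/2` (here `j' = m+1−s−1/2`, `m ∈ {0,…,2s−1}`)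
and `s2 = 2s`. -/
noncomputable def Gn (s2 : ℕ) (lam : ℂ) (N : ℕ) (σ : Fin N → ℂ) (u v : ℂ) : ℂ :=
  Complex.exp (-lam * (s2 : ℂ) * ∑ k, σ k) *
    ∏ k : Fin N, ∏ m ∈ range s2,
      (Complex.exp ((σ k / (s2 : ℂ)) * (v - u))
        + Complex.exp ((σ k / (s2 : ℂ)) * (u - v)
            + 2 * lam * (((m : ℂ) + 1) - (s2 : ℂ) / 2 - 1 / 2)
            + 2 * lam * ((∑ i ∈ Finset.Ioi k, σ i) - ∑ i ∈ Finset.Iio k, σ i)))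

/-!
Swapping `u` and `v` flips the sign of every spin inside the block factors, and each block
`B(x, d) = ∏ₘ (e^{αx} + e^{2λ(d + μₘ) - αx})` satisfies `B(-x, d) = e^{2λ·2s·d} B(x, -d)`, because
the offsets `μₘ = m + 1/2 - s` are symmetric about `0`. In the chain `∏ₖ B(σₖ, dₖ)`, with
`dₖ = ∑_{i>k} σᵢ - ∑_{i<k} σᵢ`, two adjacent spins `x, -x` see the same offset, so their pair of
factors is unchanged by the flip and the pair can be removed without changing the other offsets.
Since the spins only take the values `±s`, this reduces the claim to a constant chain, where the
offsets `c (n - 1 - 2k)` are again symmetric about `0` and the same reflection argument applies.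
-/

open Complex

noncomputable def chainProd (Φ : ℂ → ℂ → ℂ) : ℂ → List ℂ → ℂ
  | _, [] => 1
  | t, x :: l => Φ x (t + l.sum) * chainProd Φ (t - x) l

section ChainProd

variable (Φ : ℂ → ℂ → ℂ)

theorem chainProd_append (l₁ l₂ : List ℂ) (t : ℂ) :
    chainProd Φ t (l₁ ++ l₂) = chainProd Φ (t + l₂.sum) l₁ * chainProd Φ (t - l₁.sum) l₂ := by
  induction l₁ generalizing t with
  | nil => simp [chainProd]
  | cons x l₁ ih =>
    simp only [List.cons_append, chainProd, ih, List.sum_append, List.sum_cons, mul_assoc]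
    ring_nf

theorem chainProd_append_cons_neg_cons (l₁ l₂ : List ℂ) (x t : ℂ) :
    chainProd Φ t (l₁ ++ x :: -x :: l₂) =
      Φ x (t - l₁.sum - x + l₂.sum) * Φ (-x) (t - l₁.sum - x + l₂.sum) *
        chainProd Φ t (l₁ ++ l₂) := by
  simp only [chainProd_append, chainProd, List.sum_cons]
  ring_nf

theorem chainProd_replicate (n : ℕ) (c t : ℂ) :
    chainProd Φ t (List.replicate n c) = ∏ k ∈ range n, Φ c (t + c * (n - 1 - 2 * k)) := by
  induction n generalizing t with
  | zero => rfl
  | succ n ih =>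
    rw [List.replicate_succ, chainProd, ih, prod_range_succ', mul_comm, List.sum_replicate,
      nsmul_eq_mul]
    push_cast
    ring_nf

theorem Fin.sum_Iio_succ {M : Type*} [AddCommMonoid M] {n : ℕ} (f : Fin (n + 1) → M)
    (i : Fin n) : ∑ j ∈ Iio i.succ, f j = f 0 + ∑ j ∈ Iio i, f j.succ := by
  rw [← Ico_bot, bot_eq_zero, ← Ioo_insert_left (Fin.succ_pos i), sum_insert (by simp),
    ← Fin.map_succEmb_Iio, sum_map]
  rfl

theorem chainProd_ofFn {N : ℕ} (σ : Fin N → ℂ) (t : ℂ) :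
    chainProd Φ t (List.ofFn σ) = ∏ k, Φ (σ k) (t + ∑ i ∈ Ioi k, σ i - ∑ i ∈ Iio k, σ i) := by
  induction N generalizing t with
  | zero => rfl
  | succ N ih =>
    rw [List.ofFn_succ, chainProd, ih, Fin.prod_univ_succ, List.sum_ofFn, Fin.sum_Ioi_zero]
    simp only [Fin.sum_Ioi_succ, Fin.sum_Iio_succ]
    congr 1
    · simp [← bot_eq_zero]
    · ring_nf

end ChainProd

def FlipCovariant (κ : ℂ) (Φ : ℂ → ℂ → ℂ) : Prop :=
  ∀ x d, Φ (-x) d = exp (κ * d) * Φ x (-d)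

theorem sum_range_eq_zero_of_reflect {n : ℕ} {e : ℕ → ℂ} (he : ∀ k < n, e (n - 1 - k) = -e k) :
    ∑ k ∈ range n, e k = 0 := by
  have hneg : ∑ k ∈ range n, e k = -∑ k ∈ range n, e k :=
    calc ∑ k ∈ range n, e k = ∑ k ∈ range n, e (n - 1 - k) := (sum_range_reflect e n).symm
      _ = ∑ k ∈ range n, -e k := sum_congr rfl fun k hk => he k (mem_range.1 hk)
      _ = -∑ k ∈ range n, e k := sum_neg_distrib _
  linear_combination hneg / 2

theorem FlipCovariant.prod_range {κ : ℂ} {Φ : ℂ → ℂ → ℂ} (hΦ : FlipCovariant κ Φ) {n : ℕ}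
    {e : ℕ → ℂ} (he : ∀ k < n, e (n - 1 - k) = -e k) :
    FlipCovariant (κ * n) (fun x d => ∏ k ∈ range n, Φ x (d + e k)) := by
  intro x d
  calc ∏ k ∈ range n, Φ (-x) (d + e k)
      = ∏ k ∈ range n, exp (κ * (d + e k)) * Φ x (-d + e (n - 1 - k)) := by
        refine prod_congr rfl fun k hk => ?_
        rw [hΦ, he k (mem_range.1 hk), neg_add]
    _ = exp (κ * n * d + κ * ∑ k ∈ range n, e k) * ∏ k ∈ range n, Φ x (-d + e k) := by
        rw [prod_mul_distrib, ← exp_sum, prod_range_reflect (fun k => Φ x (-d + e k))]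
        simp only [mul_add, sum_add_distrib, sum_const, card_range, nsmul_eq_mul, mul_sum]
        ring_nf
    _ = exp (κ * n * d) * ∏ k ∈ range n, Φ x (-d + e k) := by
        rw [sum_range_eq_zero_of_reflect he, mul_zero, add_zero]

theorem FlipCovariant.chainProd_neg_replicate {κ : ℂ} {Φ : ℂ → ℂ → ℂ} (hΦ : FlipCovariant κ Φ)
    (n : ℕ) (c : ℂ) :
    chainProd (fun x => Φ (-x)) 0 (List.replicate n c) = chainProd Φ 0 (List.replicate n c) := by
  have he : ∀ k < n, c * (n - 1 - 2 * ((n - 1 - k : ℕ) : ℂ)) = -(c * (n - 1 - 2 * k)) := by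
    intro k hk
    rw [Nat.cast_sub (by omega), Nat.cast_sub (by omega)]
    push_cast
    ring
  simpa [chainProd_replicate] using hΦ.prod_range he c 0

theorem FlipCovariant.chainProd_neg {κ : ℂ} {Φ : ℂ → ℂ → ℂ} (hΦ : FlipCovariant κ Φ) {c : ℂ}
    (l : List ℂ) (hl : ∀ x ∈ l, x = c ∨ x = -c) :
    chainProd (fun x => Φ (-x)) 0 l = chainProd Φ 0 l := by
  induction hn : l.length using Nat.strong_induction_on generalizing l with
  | _ n ih =>
    by_cases hconst : l.IsChain (· = ·)
    · cases l with
      | nil => rfl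
      | cons a l =>
        rw [List.isChain_cons_eq_iff_eq_replicate.1 hconst, ← List.replicate_succ]
        exact hΦ.chainProd_neg_replicate _ a
    · obtain ⟨x, y, l₁, l₂, rfl, hxy⟩ : ∃ x y l₁ l₂, l = l₁ ++ x :: y :: l₂ ∧ x ≠ y := by
        simpa [List.isChain_iff_forall_rel_of_append_cons_cons] using hconst
      obtain rfl : y = -x := by
        rcases hl x (by simp) with rfl | rfl <;> rcases hl y (by simp) with rfl | rfl <;>
          simp_all
      have hlen : (l₁ ++ l₂).length < n := by simp [← hn]
      rw [chainProd_append_cons_neg_cons, chainProd_append_cons_neg_cons,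
        ih _ hlen (l₁ ++ l₂) (fun z hz => hl z (by simp at hz ⊢; tauto)) rfl, neg_neg,
        mul_comm (Φ (-x) _)]

noncomputable def spinFactor (α κ x e : ℂ) : ℂ :=
  exp (α * x) + exp (κ * e - α * x)

theorem spinFactor_neg_left (α κ x e : ℂ) : spinFactor (-α) κ x e = spinFactor α κ (-x) e := by
  simp only [spinFactor, neg_mul, mul_neg]

theorem flipCovariant_spinFactor (α κ : ℂ) : FlipCovariant κ (spinFactor α κ) := by
  intro x d
  simp only [spinFactor, mul_add, ← exp_add]
  rw [add_comm]
  ring_nf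

noncomputable def spinBlock (s2 : ℕ) (lam α x d : ℂ) : ℂ :=
  ∏ m ∈ range s2, spinFactor α (2 * lam) x (d + (m + 1 / 2 - s2 / 2))

theorem flipCovariant_spinBlock (s2 : ℕ) (lam α : ℂ) :
    FlipCovariant (2 * lam * s2) (spinBlock s2 lam α) :=
  (flipCovariant_spinFactor α (2 * lam)).prod_range fun m hm => by
    rw [Nat.cast_sub (by omega), Nat.cast_sub (by omega)]
    push_cast
    ring

theorem Gn_eq_chainProd (s2 : ℕ) (lam : ℂ) {N : ℕ} (σ : Fin N → ℂ) (u v : ℂ) :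
    Gn s2 lam N σ u v =
      exp (-lam * s2 * ∑ k, σ k) * chainProd (spinBlock s2 lam ((v - u) / s2)) 0 (List.ofFn σ) := by
  rw [chainProd_ofFn, Gn]
  congr 1
  refine prod_congr rfl fun k _ => prod_congr rfl fun m _ => ?_
  rw [spinFactor]
  congr 2 <;> ring

theorem spinBlock_swap (s2 : ℕ) (lam u v : ℂ) :
    spinBlock s2 lam ((u - v) / s2) = fun x => spinBlock s2 lam ((v - u) / s2) (-x) := by
  ext x d
  rw [show (u - v) / s2 = -((v - u) / s2) by ring]
  simp only [spinBlock, spinFactor_neg_left]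

theorem Gn_symmetric_general (s2 : ℕ) (lam : ℂ) :
    ∀ N : ℕ, 1 ≤ N → ∀ σ : Fin N → ℂ,
      (∀ i, σ i = (s2 : ℂ) / 2 ∨ σ i = -((s2 : ℂ) / 2)) →
      ∀ u v : ℂ, Gn s2 lam N σ u v = Gn s2 lam N σ v u := by
  intro N _ σ hσ u v
  have hσ' : ∀ x ∈ List.ofFn σ, x = (s2 : ℂ) / 2 ∨ x = -((s2 : ℂ) / 2) := by
    simpa [List.mem_ofFn] using hσ
  rw [Gn_eq_chainProd, Gn_eq_chainProd, spinBlock_swap,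
    (flipCovariant_spinBlock s2 lam _).chainProd_neg _ hσ']

/-- Symmetry of the scalar products (Appendix A): for every `N ≥ 1` and every choice of
`σ_i ∈ {±s}`, the function `G_N(σ₁,…,σ_N)(u,v)` is symmetric in `(u,v)`. -/
theorem Gn_symmetric (s2 : ℕ) (hs2 : 1 ≤ s2) (lam : ℂ) :
    ∀ N : ℕ, 1 ≤ N → ∀ σ : Fin N → ℂ,
      (∀ i, σ i = (s2 : ℂ) / 2 ∨ σ i = -((s2 : ℂ) / 2)) →
      ∀ u v : ℂ, Gn s2 lam N σ u v = Gn s2 lam N σ v u :=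
  Gn_symmetric_general s2 lam
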